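/- Fix R > 0 and α > 0, and let G, H satisfy: for every a ≥ 1, b > 0, G(aτ^b) ≍ G(τ); H'(τ) ≍ τ⁻¹G(τ) > 0; H(τ) → ∞; τ^{-δ}H(τ) → 0 for every δ > 0. Suppose additionally there exists a strictly increasing convex function Φ_α on [R, ∞) with Φ_α⁻¹(τ) = τ H(τ)^{-α} for all τ ∈ [Φ_α(R), ∞). Then Φ_α(τ) ≍ τ H(τ)^α as τ → ∞. -/

import Mathlib

/-!
Applying `Φ⁻¹` to `Φ τ` and using injectivity of `Φ` gives the fixed-point equation
`Φ τ = τ H(Φ τ)^α`, so it suffices to show `H(Φ τ) ≍ H(τ)`. Since `H → ∞`, eventually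
`τ ≤ Φ τ`; since `H(s) ≤ s^δ` for every `δ > 0`, the fixed-point equation gives `Φ τ ≤ τ²`.
`H` is eventually increasing, and `H' ≍ G/τ` together with `G(τ²) ≍ G(τ)` makes
`c H(u) - H(u²)` eventually nondecreasing for a suitable `c`, whence `H(u²) ≤ D H(u)`. Thus
`H(τ) ≤ H(Φ τ) ≤ H(τ²) ≤ D H(τ)`.
-/

/-- `Asymp f g` : `f(τ) ≍ g(τ)` as `τ → ∞`. -/
def Asymp (f g : ℝ → ℝ) : Prop :=
  ∃ C : ℝ, 0 < C ∧ ∃ M : ℝ, ∀ τ : ℝ, M ≤ τ → C⁻¹ * g τ ≤ f τ ∧ f τ ≤ C * g τ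

open Set Filter Topology

theorem asymp_iff_eventually {f g : ℝ → ℝ} :
    Asymp f g ↔ ∃ C, 0 < C ∧ ∀ᶠ τ in atTop, C⁻¹ * g τ ≤ f τ ∧ f τ ≤ C * g τ := by
  simp only [Asymp, eventually_atTop]

theorem monotoneOn_Ici_of_hasDerivAt_nonneg {f f' : ℝ → ℝ} {A : ℝ}
    (hf : ∀ x ∈ Ici A, HasDerivAt f (f' x) x) (hf' : ∀ x ∈ Ici A, 0 ≤ f' x) :
    MonotoneOn f (Ici A) :=
  monotoneOn_of_hasDerivWithinAt_nonneg (convex_Ici A)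
    (fun x hx ↦ (hf x hx).continuousAt.continuousWithinAt)
    (fun x hx ↦ (hf x (interior_subset hx)).hasDerivWithinAt)
    (fun x hx ↦ hf' x (interior_subset hx))

theorem le_sq_of_le_mul_sqrt {x τ : ℝ} (h : x ≤ τ * √x) : x ≤ τ ^ 2 := by
  rcases le_or_gt x 0 with hx | hx
  · exact hx.trans (sq_nonneg τ)
  · have hs := Real.sq_sqrt hx.le
    nlinarith [Real.sqrt_pos.2 hx]

theorem exists_eventually_deriv_sq_le {G H' : ℝ → ℝ}
    (hG : Asymp (fun τ ↦ G (τ ^ 2)) G) (hH' : Asymp H' (fun τ ↦ τ⁻¹ * G τ)) :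
    ∃ c, 0 ≤ c ∧ ∀ᶠ u in atTop, H' (u ^ 2) * (2 * u) ≤ c * H' u := by
  obtain ⟨Ca, hCa, hGsq⟩ := asymp_iff_eventually.1 hG
  obtain ⟨Cb, hCb, hH'G⟩ := asymp_iff_eventually.1 hH'
  refine ⟨2 * Cb * Ca * Cb, by positivity, ?_⟩
  filter_upwards [eventually_gt_atTop 0, hGsq, hH'G,
    (tendsto_pow_atTop two_ne_zero).eventually hH'G] with u hu hGu hH'u hH'u2
  have hGu' : u⁻¹ * G u ≤ Cb * H' u := (inv_mul_le_iff₀ hCb).1 hH'u.1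
  calc H' (u ^ 2) * (2 * u)
      ≤ Cb * ((u ^ 2)⁻¹ * G (u ^ 2)) * (2 * u) := by gcongr; exact hH'u2.2
    _ = 2 * Cb * u⁻¹ * G (u ^ 2) := by field_simp
    _ ≤ 2 * Cb * u⁻¹ * (Ca * G u) := by gcongr; exact hGu.2
    _ = 2 * Cb * Ca * (u⁻¹ * G u) := by ring
    _ ≤ 2 * Cb * Ca * (Cb * H' u) := by gcongr
    _ = 2 * Cb * Ca * Cb * H' u := by ring

theorem exists_eventually_sq_le_mul {H H' : ℝ → ℝ} {c : ℝ} (hc : 0 ≤ c)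
    (hH : ∀ᶠ u in atTop, HasDerivAt H (H' u) u)
    (hH' : ∀ᶠ u in atTop, H' (u ^ 2) * (2 * u) ≤ c * H' u)
    (h1 : ∀ᶠ u in atTop, 1 ≤ H u) :
    ∃ D, ∀ᶠ u in atTop, H (u ^ 2) ≤ D * H u := by
  obtain ⟨A, hA⟩ := eventually_atTop.1 ((hH.and (hH'.and h1)).and (eventually_ge_atTop 1))
  have hsq : ∀ u ∈ Ici A, u ^ 2 ∈ Ici A := fun u hu ↦
    le_trans hu (le_self_pow₀ (hA u hu).2 two_ne_zero)
  have hF : MonotoneOn (fun u ↦ c * H u - H (u ^ 2)) (Ici A) := by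
    refine monotoneOn_Ici_of_hasDerivAt_nonneg (f' := fun u ↦ c * H' u - H' (u ^ 2) * (2 * u))
      (fun u hu ↦ ?_) (fun u hu ↦ ?_)
    · have hpow : HasDerivAt (fun x : ℝ ↦ x ^ 2) (2 * u) u := by
        simpa using hasDerivAt_pow 2 u
      exact ((hA u hu).1.1.const_mul c).sub ((hA _ (hsq u hu)).1.1.comp (h := fun x ↦ x ^ 2) u hpow)
    · exact sub_nonneg.2 (hA u hu).1.2.1
  refine ⟨c + H (A ^ 2), eventually_atTop.2 ⟨A, fun u hu ↦ ?_⟩⟩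
  have hFu := hF self_mem_Ici hu hu
  have hHA := (hA A le_rfl).1.2.2
  have hHA2 := (hA _ (hsq A self_mem_Ici)).1.2.2
  have hHu := (hA u hu).1.2.2
  simp only at hFu
  nlinarith

section Inverse

variable {Φ H : ℝ → ℝ} {R α : ℝ}

theorem eventually_le_of_inverse (hα : 0 ≤ α) (hΦ : MonotoneOn Φ (Ici R))
    (hΦinv : ∀ τ ∈ Ici (Φ R), τ * H τ ^ (-α) ∈ Ici R ∧ Φ (τ * H τ ^ (-α)) = τ)
    (hH : ∀ᶠ τ in atTop, 1 ≤ H τ) :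
    ∀ᶠ σ in atTop, σ ≤ Φ σ := by
  filter_upwards [eventually_ge_atTop (Φ R), eventually_ge_atTop R, eventually_ge_atTop 0, hH]
    with σ hσΦ hσR hσ0 hHσ
  obtain ⟨hmem, hinv⟩ := hΦinv σ hσΦ
  have hle : σ * H σ ^ (-α) ≤ σ :=
    mul_le_of_le_one_right hσ0 (Real.rpow_le_one_of_one_le_of_nonpos hHσ (neg_nonpos.2 hα))
  calc σ = Φ (σ * H σ ^ (-α)) := hinv.symm
    _ ≤ Φ σ := hΦ hmem hσR hle

theorem eventually_eq_mul_rpow_of_inverse (hΦ : StrictMonoOn Φ (Ici R))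
    (hΦinv : ∀ τ ∈ Ici (Φ R), τ * H τ ^ (-α) ∈ Ici R ∧ Φ (τ * H τ ^ (-α)) = τ)
    (hH : ∀ᶠ s in atTop, 0 < H s) (hΦtop : Tendsto Φ atTop atTop) :
    ∀ᶠ τ in atTop, Φ τ = τ * H (Φ τ) ^ α := by
  filter_upwards [eventually_ge_atTop R, hΦtop.eventually hH] with τ hτR hHΦ
  obtain ⟨hmem, hinv⟩ := hΦinv (Φ τ) (hΦ.monotoneOn self_mem_Ici hτR hτR)
  have hτ : Φ τ * H (Φ τ) ^ (-α) = τ := hΦ.injOn hmem hτR hinv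
  calc Φ τ = Φ τ * H (Φ τ) ^ (-α) * H (Φ τ) ^ α := by
        rw [mul_assoc, ← Real.rpow_add hHΦ, neg_add_cancel, Real.rpow_zero, mul_one]
    _ = τ * H (Φ τ) ^ α := by rw [hτ]

end Inverse

theorem eventually_rpow_le_sqrt {H : ℝ → ℝ} {α : ℝ} (hα : 0 < α)
    (hH : ∀ᶠ s in atTop, 0 ≤ H s)
    (hd : Tendsto (fun s ↦ s ^ (-(2 * α)⁻¹) * H s) atTop (𝓝 0)) :
    ∀ᶠ s in atTop, H s ^ α ≤ √s := by
  filter_upwards [hd.eventually_lt_const one_pos, eventually_gt_atTop 0, hH] with s hs hs0 hHs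
  have hHle : H s ≤ s ^ (2 * α)⁻¹ := by
    rw [Real.rpow_neg hs0.le, inv_mul_lt_iff₀ (by positivity), mul_one] at hs
    exact hs.le
  calc H s ^ α ≤ (s ^ (2 * α)⁻¹) ^ α := by gcongr
    _ = √s := by
      rw [← Real.rpow_mul hs0.le, Real.sqrt_eq_rpow]
      congr 1
      field_simp

theorem eventually_le_sq_of_eq_mul {Φ K : ℝ → ℝ}
    (hfix : ∀ᶠ τ in atTop, Φ τ = τ * K (Φ τ)) (hK : ∀ᶠ s in atTop, K s ≤ √s)
    (hΦtop : Tendsto Φ atTop atTop) :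
    ∀ᶠ τ in atTop, Φ τ ≤ τ ^ 2 := by
  filter_upwards [hfix, hΦtop.eventually hK, eventually_ge_atTop 0] with τ hτ hKτ hτ0
  refine le_sq_of_le_mul_sqrt ?_
  calc Φ τ = τ * K (Φ τ) := hτ
    _ ≤ τ * √(Φ τ) := by gcongr

theorem asymp_mul_rpow_of_comparable {f k H : ℝ → ℝ} {α D : ℝ} (hα : 0 ≤ α)
    (hf : ∀ᶠ τ in atTop, f τ = τ * k τ ^ α)
    (hk : ∀ᶠ τ in atTop, 0 ≤ H τ ∧ H τ ≤ k τ ∧ k τ ≤ D * H τ) :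
    Asymp f (fun τ ↦ τ * H τ ^ α) := by
  set D' := max D 1
  have hD' : 1 ≤ D' ^ α := Real.one_le_rpow (le_max_right D 1) hα
  refine asymp_iff_eventually.2 ⟨D' ^ α, by positivity, ?_⟩
  filter_upwards [hf, hk, eventually_ge_atTop 0] with τ hfτ ⟨hH0, hHk, hkD⟩ hτ0
  have hk0 : 0 ≤ k τ := hH0.trans hHk
  have hkD' : k τ ≤ D' * H τ := hkD.trans (by gcongr; exact le_max_left D 1)
  rw [hfτ]
  constructor
  · calc (D' ^ α)⁻¹ * (τ * H τ ^ α) ≤ τ * H τ ^ α :=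
          mul_le_of_le_one_left (by positivity) (inv_le_one_of_one_le₀ hD')
      _ ≤ τ * k τ ^ α := by gcongr
  · calc τ * k τ ^ α ≤ τ * (D' * H τ) ^ α := by
          gcongr
      _ = D' ^ α * (τ * H τ ^ α) := by
          rw [Real.mul_rpow (by positivity) hH0]
          ring

theorem stmt_10_general (R α : ℝ) (hα : 0 < α)
    (G H H' Φ : ℝ → ℝ)
    (hHderiv : ∀ τ ∈ Set.Ici R, HasDerivAt H (H' τ) τ)
    (ha : ∀ a : ℝ, 1 ≤ a → ∀ b : ℝ, 0 < b → Asymp (fun τ => G (a * τ ^ b)) G)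
    (hb : Asymp H' (fun τ => τ⁻¹ * G τ))
    (hb' : ∃ M : ℝ, ∀ τ : ℝ, M ≤ τ → 0 < H' τ)
    (hc : Filter.Tendsto H Filter.atTop Filter.atTop)
    (hd : ∀ δ : ℝ, 0 < δ →
      Filter.Tendsto (fun τ : ℝ => τ ^ (-δ) * H τ) Filter.atTop (nhds 0))
    (hΦmono : StrictMonoOn Φ (Set.Ici R))
    (hΦinv : ∀ τ ∈ Set.Ici (Φ R), τ * H τ ^ (-α) ∈ Set.Ici R ∧ Φ (τ * H τ ^ (-α)) = τ) :
    Asymp Φ (fun τ => τ * H τ ^ α) := by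
  have hH1 : ∀ᶠ τ in atTop, 1 ≤ H τ := hc.eventually_ge_atTop 1
  have hHderiv' : ∀ᶠ τ in atTop, HasDerivAt H (H' τ) τ := eventually_atTop.2 ⟨R, hHderiv⟩
  obtain ⟨M, hH'pos⟩ := hb'
  have hHmono : MonotoneOn H (Ici (max R M)) := monotoneOn_Ici_of_hasDerivAt_nonneg
    (fun τ hτ ↦ hHderiv τ ((le_max_left R M).trans hτ))
    (fun τ hτ ↦ (hH'pos τ ((le_max_right R M).trans hτ)).le)
  obtain ⟨c, hc0, hH'sq⟩ := exists_eventually_deriv_sq_le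
    (by simpa only [one_mul, Real.rpow_two] using ha 1 le_rfl 2 two_pos) hb
  obtain ⟨D, hHsq⟩ := exists_eventually_sq_le_mul hc0 hHderiv' hH'sq hH1
  have hΦge := eventually_le_of_inverse hα.le hΦmono.monotoneOn hΦinv hH1
  have hΦtop : Tendsto Φ atTop atTop := tendsto_atTop_mono' _ hΦge tendsto_id
  have hfix := eventually_eq_mul_rpow_of_inverse hΦmono hΦinv
    (hH1.mono fun _ h ↦ one_pos.trans_le h) hΦtop
  have hΦle := eventually_le_sq_of_eq_mul hfix
    (eventually_rpow_le_sqrt hα (hH1.mono fun _ h ↦ zero_le_one.trans h) (hd _ (by positivity)))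
    hΦtop
  refine asymp_mul_rpow_of_comparable (D := D) hα.le hfix ?_
  filter_upwards [hH1, hHsq, hΦge, hΦle, eventually_ge_atTop (max R M)]
    with τ hHτ hHsqτ hτΦ hΦτ hτM
  exact ⟨zero_le_one.trans hHτ, hHmono hτM (hτM.trans hτΦ) hτΦ,
    (hHmono (hτM.trans hτΦ) (hτM.trans (hτΦ.trans hΦτ)) hΦτ).trans hHsqτ⟩

theorem stmt_10 (R α : ℝ) (hR : 0 < R) (hα : 0 < α)
    (G H H' Φ : ℝ → ℝ)
    (hGpos : ∀ τ ∈ Set.Ici R, 0 < G τ) (hHpos : ∀ τ ∈ Set.Ici R, 0 < H τ)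
    (hGcont : ContinuousOn G (Set.Ici R))
    (hHderiv : ∀ τ ∈ Set.Ici R, HasDerivAt H (H' τ) τ)
    (hH'cont : ContinuousOn H' (Set.Ici R))
    (ha : ∀ a : ℝ, 1 ≤ a → ∀ b : ℝ, 0 < b → Asymp (fun τ => G (a * τ ^ b)) G)
    (hb : Asymp H' (fun τ => τ⁻¹ * G τ))
    (hb' : ∃ M : ℝ, ∀ τ : ℝ, M ≤ τ → 0 < H' τ)
    (hc : Filter.Tendsto H Filter.atTop Filter.atTop)
    (hd : ∀ δ : ℝ, 0 < δ →
      Filter.Tendsto (fun τ : ℝ => τ ^ (-δ) * H τ) Filter.atTop (nhds 0))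
    (hΦmono : StrictMonoOn Φ (Set.Ici R))
    (hΦconv : ConvexOn ℝ (Set.Ici R) Φ)
    (hΦinv : ∀ τ ∈ Set.Ici (Φ R), τ * H τ ^ (-α) ∈ Set.Ici R ∧ Φ (τ * H τ ^ (-α)) = τ) :
    Asymp Φ (fun τ => τ * H τ ^ α) :=
  stmt_10_general R α hα G H H' Φ hHderiv ha hb hb' hc hd hΦmono hΦinv
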